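/- arXiv:math/9904038 — 2 statements merged into one kernel-verified Lean document; each statement's English description precedes it below -/
import Mathlib

section
/- Let G be a simplicial group, α = (i_l,…,i_1), β = (j_m,…,j_1) ∈ S(n) with α ∩ β = ∅ and β < α, and x ∈ NG_{n−#α}, y ∈ NG_{n−#β}. Set v = [s_α x, s_β y]. Then for every k with k > i_l + 1 and k > j_m + 1, one has p_k(v) = v, where p_k(z) = z·s_k d_k(z)^{-1}. -/
/-- A simplicial group: groups `G n` with face maps `d n i : G (n+1) →* G n`
and degeneracies `s n i : G n →* G (n+1)` satisfying the simplicial identities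
(asserted in the meaningful index ranges). -/
structure SGrp where
  G : ℕ → Type
  grp : ∀ n, Group (G n)
  d : (n : ℕ) → ℕ → (G (n+1) →* G n)
  s : (n : ℕ) → ℕ → (G n →* G (n+1))
  dd : ∀ n i j, i < j → j ≤ n + 2 → ∀ x,
    d n i (d (n+1) j x) = d n (j-1) (d (n+1) i x)
  ds_lt : ∀ n i j, i < j → j ≤ n + 1 → ∀ x,
    d (n+1) i (s (n+1) j x) = s n (j-1) (d n i x)
  ds_eq : ∀ n j, j ≤ n → ∀ x, d n j (s n j x) = x
  ds_succ : ∀ n j, j ≤ n → ∀ x, d n (j+1) (s n j x) = x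
  ds_gt : ∀ n i j, j + 1 < i → i ≤ n + 2 → ∀ x,
    d (n+1) i (s (n+1) j x) = s n j (d n (i-1) x)
  ss : ∀ n i j, i ≤ j → j ≤ n → ∀ x,
    s (n+1) i (s n j x) = s (n+1) (j+1) (s n i x)

attribute [instance] SGrp.grp

/-- Moore complex: `NG 0 = G 0`, `NG (n+1) = ⋂_{i ≤ n} ker (d_i)`. -/
def SGrp.NG (X : SGrp) : (n : ℕ) → Subgroup (X.G n)
  | 0 => ⊤
  | (n+1) => ⨅ i ∈ Finset.range (n+1), (X.d n i).ker

/-- Transport along an equality of dimensions. -/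
def SGrp.castHom (X : SGrp) {a b : ℕ} (h : a = b) : X.G a →* X.G b where
  toFun x := h ▸ x
  map_one' := by subst h; rfl
  map_mul' x y := by subst h; rfl

/-- Composite degeneracy `s_α = s_{i_l} ⋯ s_{i_1}` for `α = [i_l, …, i_1]`
(head applied last). -/
def SGrp.sComp (X : SGrp) : (m : ℕ) → (α : List ℕ) → (X.G m →* X.G (m + α.length))
  | _, [] => MonoidHom.id _
  | m, i :: rest => (X.s (m + rest.length) i).comp (X.sComp m rest)

/-- `s_α : G_{n-#α} →* G_n` for `α ∈ S(n)` (the trivial hom if lengths mismatch). -/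
def SGrp.sMapN (X : SGrp) (n : ℕ) (α : List ℕ) : X.G (n - α.length) →* X.G n :=
  if h : n - α.length + α.length = n then
    (X.castHom h).comp (X.sComp (n - α.length) α) else 1

/-- `p_j(z) = z ⬝ (s_j d_j z)⁻¹` on `G (n+1)`. -/
def SGrp.p (X : SGrp) (n j : ℕ) (z : X.G (n+1)) : X.G (n+1) :=
  z * (X.s n j (X.d n j z))⁻¹

/-- `pComp n j = p_j ∘ ⋯ ∘ p_0` on `G (n+1)`. -/
def SGrp.pComp (X : SGrp) (n : ℕ) : ℕ → X.G (n+1) → X.G (n+1)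
  | 0 => X.p n 0
  | (j+1) => fun z => X.p n (j+1) (X.pComp n j z)

/-- `pComp1 n l = p_l ∘ ⋯ ∘ p_1` on `G (n+1)` (identity for `l = 0`). -/
def SGrp.pComp1 (X : SGrp) (n : ℕ) : ℕ → X.G (n+1) → X.G (n+1)
  | 0 => id
  | (j+1) => fun z => X.p n (j+1) (X.pComp1 n j z)

/-- The ordering of `S(n)` from the paper: `α < β` iff comparing from the
smallest indices (the reversed lists), either the first difference has the
index of `α` larger, or `α`'s indices (from the small end) form a proper
prefix of `β`'s. -/
def Slt (α β : List ℕ) : Prop := List.Lex (· > ·) α.reverse β.reverse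

/-- `α` represents a nonidentity element of `S(N)`: a nonempty strictly
decreasing tuple of indices `< N`. -/
def SIdx (N : ℕ) (α : List ℕ) : Prop :=
  α ≠ [] ∧ α.Chain' (· > ·) ∧ α.length ≤ N ∧ ∀ i ∈ α, i < N

/-!
Since every index of `α` is smaller than `k - 1`, the face `d_k` commutes past the
degeneracies in `s_α` (shifting down by one at each step), so `d_k (s_α x)` is a
degeneracy of a face of `x`; that face is trivial because `x` lies in the Moore
complex. Hence `d_k` kills `s_α x`, therefore also the commutator `v`, and
`p_k v = v · (s_k d_k v)⁻¹ = v`.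
-/

namespace SGrp

variable (X : SGrp)

lemma s_castHom {a b : ℕ} (h : a = b) (h' : a + 1 = b + 1) (i : ℕ) (x : X.G a) :
    X.s b i (X.castHom h x) = X.castHom h' (X.s a i x) := by
  subst h; rfl

lemma d_eq_one_of_mem_NG {n : ℕ} {x : X.G (n + 1)} (hx : x ∈ X.NG (n + 1)) {i : ℕ}
    (hi : i ≤ n) : X.d n i x = 1 := by
  simp only [NG, Subgroup.mem_iInf, Finset.mem_range, MonoidHom.mem_ker] at hx
  exact hx i (Nat.lt_succ_of_le hi)

/-- The dimension `N + 1` of the target is only propositionally `M + #α`, hence the cast. -/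
lemma d_castHom_sComp_eq_one_of_mem_NG {M : ℕ} {x : X.G M} (hx : x ∈ X.NG M) :
    ∀ (α : List ℕ), α.IsChain (· > ·) → ∀ {N k : ℕ} (h : M + α.length = N + 1),
      (∀ i ∈ α, i + 1 < k) → k < M + α.length →
      X.d N k (X.castHom h (X.sComp M α x)) = 1
  | [], _, N, k, h, _, hkM => by
    obtain rfl : M = N + 1 := h
    exact X.d_eq_one_of_mem_NG hx (Nat.lt_succ_iff.mp hkM)
  | i :: rest, hc, N, k, h, hk, hkM => by
    have hik : i + 1 < k := hk i List.mem_cons_self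
    have hrest : ∀ j ∈ rest, j + 1 < k - 1 := fun j hj => by
      have : j < i := (List.isChain_iff_pairwise.mp hc |> List.pairwise_cons.mp).1 j hj
      omega
    simp only [List.length_cons] at h hkM
    obtain ⟨N', rfl⟩ : ∃ N', N = N' + 1 := ⟨M + rest.length - 1, by omega⟩
    have h' : M + rest.length = N' + 1 := by omega
    change X.d (N' + 1) k (X.castHom h (X.s (M + rest.length) i (X.sComp M rest x))) = 1
    rw [← X.s_castHom h' h, X.ds_gt N' k i hik (by omega),
      d_castHom_sComp_eq_one_of_mem_NG hx rest hc.tail h' hrest (by omega), map_one]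

lemma d_sMapN_eq_one_of_mem_NG {n : ℕ} {α : List ℕ} (hc : α.IsChain (· > ·))
    (hlen : α.length ≤ n + 1) {x : X.G (n + 1 - α.length)} (hx : x ∈ X.NG (n + 1 - α.length))
    {k : ℕ} (hk : ∀ i ∈ α, i + 1 < k) (hkn : k ≤ n) :
    X.d n k (X.sMapN (n + 1) α x) = 1 := by
  have hL : n + 1 - α.length + α.length = n + 1 := by omega
  rw [sMapN, dif_pos hL, MonoidHom.comp_apply]
  exact X.d_castHom_sComp_eq_one_of_mem_NG hx α hc hL hk (by omega)

lemma p_eq_self_of_d_eq_one {n k : ℕ} {z : X.G (n + 1)} (hz : X.d n k z = 1) :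
    X.p n k z = z := by
  rw [p, hz, map_one, inv_one, mul_one]

end SGrp

open scoped commutatorElement

theorem stmt8_general (X : SGrp) (n : ℕ) (α β : List ℕ)
    (hα : SIdx (n+1) α)
    (x : X.G (n+1 - α.length)) (y : X.G (n+1 - β.length))
    (hx : x ∈ X.NG (n+1 - α.length))
    (k : ℕ) (hkα : ∀ i ∈ α, i + 1 < k)
    (hkn : k ≤ n) :
    X.p n k ⁅X.sMapN (n+1) α x, X.sMapN (n+1) β y⁆ =
      ⁅X.sMapN (n+1) α x, X.sMapN (n+1) β y⁆ := by
  apply X.p_eq_self_of_d_eq_one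
  rw [map_commutatorElement, X.d_sMapN_eq_one_of_mem_NG hα.2.1 hα.2.2.1 hx hkα hkn,
    commutatorElement_one_left]

/-- Lemma 3.1(ii). For disjoint `α, β ∈ S(n)` with `β < α`, and
`v = [s_α x, s_β y]`, if `k > i_l + 1` and `k > j_m + 1` (i.e. `k` exceeds by
more than one every index of `α` and of `β`; `i_l`, `j_m` are the largest),
then `p_k(v) = v`. (Stated at level `n+1`; `k ≤ n` keeps `p_k` in range.) -/
theorem stmt8 (X : SGrp) (n : ℕ) (α β : List ℕ)
    (hα : SIdx (n+1) α) (hβ : SIdx (n+1) β)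
    (hdisj : ∀ i ∈ α, i ∉ β) (hlt : Slt β α)
    (x : X.G (n+1 - α.length)) (y : X.G (n+1 - β.length))
    (hx : x ∈ X.NG (n+1 - α.length)) (hy : y ∈ X.NG (n+1 - β.length))
    (k : ℕ) (hkα : ∀ i ∈ α, i + 1 < k) (hkβ : ∀ j ∈ β, j + 1 < k)
    (hkn : k ≤ n) :
    X.p n k ⁅X.sMapN (n+1) α x, X.sMapN (n+1) β y⁆ =
      ⁅X.sMapN (n+1) α x, X.sMapN (n+1) β y⁆ :=
  stmt8_general X n α β hα x y hx k hkα hkn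
end

section
/- (Theorem A) Let G be a simplicial group, n > 1, D_n ≤ G_n the subgroup generated by all degenerate elements (the images of all s_i : G_{n-1} → G_n), and N_n ≤ G_n the normal closure of all elements F_{α,β}(x,y) = p([s_α x, s_β y]) for (α,β) ∈ P(n), x ∈ NG_{n−#α}, y ∈ NG_{n−#β}, where p = p_{n-1}∘⋯∘p_0 with p_j(z) = z·s_j d_j(z)^{-1}. Then NG_n ∩ D_n = N_n ∩ D_n. -/
open scoped commutatorElement

namespace SGrp

open Subgroup
open scoped Pointwise

variable {X : SGrp}

variable (X) in
def kerFacesBelow : (q : ℕ) → ℕ → Subgroup (X.G q)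
  | 0, _ => ⊤
  | q + 1, r => ⨅ j ∈ Finset.range r, (X.d q j).ker

theorem mem_kerFacesBelow_succ {q r : ℕ} {g : X.G (q + 1)} :
    g ∈ X.kerFacesBelow (q + 1) r ↔ ∀ j < r, X.d q j g = 1 := by
  simp [kerFacesBelow]

theorem NG_eq_kerFacesBelow (q : ℕ) : X.NG q = X.kerFacesBelow q q := by
  cases q <;> rfl

theorem mem_kerFacesBelow_zero (q : ℕ) (g : X.G q) : g ∈ X.kerFacesBelow q 0 := by
  cases q with
  | zero => trivial
  | succ q => simp [mem_kerFacesBelow_succ]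

theorem kerFacesBelow_antitone {q r r' : ℕ} (h : r ≤ r') :
    X.kerFacesBelow q r' ≤ X.kerFacesBelow q r := by
  cases q with
  | zero => exact le_top
  | succ q =>
    intro g hg
    rw [mem_kerFacesBelow_succ] at hg ⊢
    exact fun j hj => hg j (hj.trans_le h)

theorem commutatorElement_mem_kerFacesBelow {q a b : ℕ} {g h : X.G q}
    (hg : g ∈ X.kerFacesBelow q a) (hh : h ∈ X.kerFacesBelow q b) :
    ⁅g, h⁆ ∈ X.kerFacesBelow q (max a b) := by
  cases q with
  | zero => trivial
  | succ q =>
    rw [mem_kerFacesBelow_succ] at *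
    intro j hj
    rw [map_commutatorElement]
    rcases lt_max_iff.mp hj with hj | hj
    · rw [hg j hj, commutatorElement_one_left]
    · rw [hh j hj, commutatorElement_one_right]

instance kerFacesBelow_normal (q r : ℕ) : (X.kerFacesBelow q r).Normal := by
  cases q with
  | zero => exact Subgroup.normal_top
  | succ q =>
    refine ⟨fun a ha g => ?_⟩
    rw [mem_kerFacesBelow_succ] at *
    intro j hj
    simp [ha j hj]

instance NG_normal (q : ℕ) : (X.NG q).Normal :=
  NG_eq_kerFacesBelow q ▸ kerFacesBelow_normal q q

theorem d_p_self {q j : ℕ} (hj : j ≤ q) (z : X.G (q + 1)) : X.d q j (X.p q j z) = 1 := by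
  simp [SGrp.p, X.ds_eq q j hj]

theorem d_p_of_lt {q i j : ℕ} (hij : i < j) (hj : j ≤ q) {z : X.G (q + 1)}
    (hz : X.d q i z = 1) : X.d q i (X.p q j z) = 1 := by
  obtain ⟨q, rfl⟩ : ∃ q', q = q' + 1 := ⟨q - 1, by omega⟩
  rw [SGrp.p, map_mul, map_inv, hz, X.ds_lt q i j hij (by omega), X.dd q i j hij (by omega), hz]
  simp

theorem p_of_d_eq_one {q j : ℕ} {z : X.G (q + 1)} (hz : X.d q j z = 1) : X.p q j z = z := by
  simp [SGrp.p, hz]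

theorem pComp_mem_kerFacesBelow {q j : ℕ} (hj : j ≤ q) (z : X.G (q + 1)) :
    X.pComp q j z ∈ X.kerFacesBelow (q + 1) (j + 1) := by
  rw [mem_kerFacesBelow_succ]
  induction j with
  | zero =>
    intro i hi
    obtain rfl : i = 0 := by omega
    exact d_p_self hj z
  | succ j ih =>
    intro i hi
    rcases Nat.lt_succ_iff_lt_or_eq.mp hi with hi | rfl
    · exact d_p_of_lt hi hj (ih (by omega) i hi)
    · exact d_p_self hj _

theorem pComp_mem_NG (q : ℕ) (z : X.G (q + 1)) : X.pComp q q z ∈ X.NG (q + 1) :=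
  pComp_mem_kerFacesBelow le_rfl z

theorem pComp_of_mem_kerFacesBelow {q j : ℕ} {z : X.G (q + 1)}
    (hz : z ∈ X.kerFacesBelow (q + 1) (j + 1)) : X.pComp q j z = z := by
  rw [mem_kerFacesBelow_succ] at hz
  induction j with
  | zero => exact p_of_d_eq_one (hz 0 (by omega))
  | succ j ih =>
    change X.p q (j + 1) (X.pComp q j z) = z
    rw [ih fun i hi => hz i (by omega), p_of_d_eq_one (hz (j + 1) (by omega))]

-- `c_r` in the factorisation `z = p(z) · s_q(c_q) ⋯ s_0(c_0)`, where `p = p_q ∘ ⋯ ∘ p_0`.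
variable (X) in
def tailFace (q : ℕ) (z : X.G (q + 1)) : ℕ → X.G q
  | 0 => X.d q 0 z
  | r + 1 => X.d q (r + 1) (X.pComp q r z)

theorem tailFace_mem {q r : ℕ} (hr : r ≤ q) (z : X.G (q + 1)) :
    X.tailFace q z r ∈ X.kerFacesBelow q r := by
  cases r with
  | zero => exact mem_kerFacesBelow_zero q _
  | succ r =>
    obtain ⟨q, rfl⟩ : ∃ q', q = q' + 1 := ⟨q - 1, by omega⟩
    rw [mem_kerFacesBelow_succ]
    intro j hj
    change X.d q j (X.d (q + 1) (r + 1) (X.pComp (q + 1) r z)) = 1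
    rw [X.dd q j (r + 1) hj (by omega),
      mem_kerFacesBelow_succ.mp (pComp_mem_kerFacesBelow (by omega) z) j hj, map_one]

theorem tailFace_eq_one {q r : ℕ} {z : X.G (q + 1)}
    (hz : z ∈ X.kerFacesBelow (q + 1) (r + 1)) : X.tailFace q z r = 1 := by
  cases r with
  | zero => exact mem_kerFacesBelow_succ.mp hz 0 (by omega)
  | succ r =>
    change X.d q (r + 1) (X.pComp q r z) = 1
    rw [pComp_of_mem_kerFacesBelow (kerFacesBelow_antitone (by omega) hz)]
    exact mem_kerFacesBelow_succ.mp hz (r + 1) (by omega)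

theorem mem_of_pComp_mem_of_tailFace {q : ℕ} (H : Subgroup (X.G (q + 1))) (z : X.G (q + 1))
    (j : ℕ) (hp : X.pComp q j z ∈ H) (hs : ∀ r ≤ j, X.s q r (X.tailFace q z r) ∈ H) :
    z ∈ H := by
  induction j with
  | zero =>
    have hz : z = X.pComp q 0 z * X.s q 0 (X.tailFace q z 0) := by
      simp [SGrp.pComp, SGrp.p, tailFace]
    rw [hz]
    exact mul_mem hp (hs 0 le_rfl)
  | succ j ih =>
    refine ih ?_ fun r hr => hs r (by omega)
    have hpj : X.pComp q j z =
        X.pComp q (j + 1) z * X.s q (j + 1) (X.tailFace q z (j + 1)) := by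
      simp [SGrp.pComp, SGrp.p, tailFace]
    rw [hpj]
    exact mul_mem hp (hs (j + 1) le_rfl)

theorem mem_of_pComp_mem {q r₀ : ℕ} (H : Subgroup (X.G (q + 1))) {z : X.G (q + 1)}
    (hz : z ∈ X.kerFacesBelow (q + 1) r₀) (hp : X.pComp q q z ∈ H)
    (hs : ∀ r, r₀ ≤ r → r ≤ q → ∀ c ∈ X.kerFacesBelow q r, X.s q r c ∈ H) : z ∈ H := by
  refine mem_of_pComp_mem_of_tailFace H z q hp fun r hr => ?_
  by_cases hr₀ : r₀ ≤ r
  · exact hs r hr₀ hr _ (tailFace_mem hr z)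
  · rw [tailFace_eq_one (kerFacesBelow_antitone (by omega) hz), map_one]
    exact one_mem H

-- `g = s_α x` with `x ∈ NG_{q - #α}` and `α` strictly decreasing.
inductive IsDegOfMoore (X : SGrp) : (q : ℕ) → List ℕ → X.G q → Prop
  | nil {q : ℕ} {x : X.G q} : x ∈ X.NG q → IsDegOfMoore X q [] x
  | cons {q j : ℕ} {α : List ℕ} {g : X.G q} :
      IsDegOfMoore X q α g → (∀ i ∈ α, i < j) → j ≤ q →
        IsDegOfMoore X (q + 1) (j :: α) (X.s q j g)

theorem castHom_castHom {a b c : ℕ} (h : a = b) (h' : b = c) (x : X.G a) :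
    X.castHom h' (X.castHom h x) = X.castHom (h.trans h') x := by
  subst h h'
  rfl

theorem sComp_castHom {a b : ℕ} (h : a = b) (α : List ℕ) (x : X.G a) :
    X.sComp b α (X.castHom h x) = X.castHom (by rw [h]) (X.sComp a α x) := by
  subst h
  rfl

theorem castHom_mem_NG {a b : ℕ} (h : a = b) {x : X.G a} (hx : x ∈ X.NG a) :
    X.castHom h x ∈ X.NG b := by
  subst h
  exact hx

namespace IsDegOfMoore

variable {q : ℕ} {α : List ℕ} {g : X.G q}

theorem inv (h : X.IsDegOfMoore q α g) : X.IsDegOfMoore q α g⁻¹ := by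
  induction h with
  | nil hx => exact nil (inv_mem hx)
  | cons _ hα hj ih => rw [← map_inv]; exact cons ih hα hj

theorem lt (h : X.IsDegOfMoore q α g) : ∀ i ∈ α, i < q := by
  induction h with
  | nil => simp
  | cons _ hα hj ih =>
    intro i hi
    rcases List.mem_cons.mp hi with rfl | hi
    · omega
    · exact (ih i hi).trans (Nat.lt_succ_self _)

theorem isChain (h : X.IsDegOfMoore q α g) : α.IsChain (· > ·) := by
  induction h with
  | nil => exact List.isChain_nil
  | cons _ hα _ ih => exact List.isChain_cons.mpr ⟨fun y hy => hα y (List.mem_of_mem_head? hy), ih⟩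

theorem mem_kerFacesBelow (h : X.IsDegOfMoore q α g) {r : ℕ} (hr : ∀ i ∈ α, r ≤ i)
    (hrq : r ≤ q) : g ∈ X.kerFacesBelow q r := by
  induction h with
  | nil hx => exact kerFacesBelow_antitone hrq (NG_eq_kerFacesBelow _ ▸ hx)
  | @cons q j α g _ _ hj ih =>
    have hrj : r ≤ j := hr j List.mem_cons_self
    have hg := ih (fun i hi => hr i (List.mem_cons_of_mem _ hi)) (hrj.trans hj)
    rw [mem_kerFacesBelow_succ]
    intro i hi
    obtain ⟨q, rfl⟩ : ∃ q', q = q' + 1 := ⟨q - 1, by omega⟩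
    rw [X.ds_lt q i j (by omega) (by omega), mem_kerFacesBelow_succ.mp hg i hi, map_one]

-- `α'` is `α` with `t` inserted, the indices `≥ t` being raised by one.
theorem exists_s_apply {t : ℕ} (h : X.IsDegOfMoore q α g) (ht : t ≤ q) :
    ∃ α', α' ≠ [] ∧ (∀ i ∈ α', i = t ∨ ∃ e ∈ α, i = e ∨ i = e + 1) ∧
      X.IsDegOfMoore (q + 1) α' (X.s q t g) := by
  induction h generalizing t with
  | nil hx => exact ⟨[t], by simp, by simp, cons (nil hx) (by simp) ht⟩
  | @cons q j α g hg hα hj ih =>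
    by_cases hjt : j < t
    · refine ⟨t :: j :: α, by simp, fun i hi => ?_, cons (cons hg hα hj) (fun i hi => ?_) ht⟩
      · rcases List.mem_cons.mp hi with rfl | hi
        · exact Or.inl rfl
        · exact Or.inr ⟨i, hi, Or.inl rfl⟩
      · rcases List.mem_cons.mp hi with rfl | hi
        · exact hjt
        · exact (hα i hi).trans hjt
    · obtain ⟨α', -, hα', hg'⟩ := ih (t := t) (by omega)
      rw [X.ss q t j (by omega) hj]
      refine ⟨(j + 1) :: α', by simp, fun i hi => ?_, cons hg' (fun i hi => ?_) (by omega)⟩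
      · rcases List.mem_cons.mp hi with rfl | hi
        · exact Or.inr ⟨j, List.mem_cons_self, Or.inr rfl⟩
        · rcases hα' i hi with h | ⟨e, he, h⟩
          · exact Or.inl h
          · exact Or.inr ⟨e, List.mem_cons_of_mem _ he, h⟩
      · rcases hα' i hi with h | ⟨e, he, h⟩
        · omega
        · have := hα e he
          omega

-- `α'` is `α` with `t` deleted, the indices above `t` being lowered by one.
theorem exists_eq_s_apply {t : ℕ} : ∀ {p : ℕ} {α : List ℕ} {g : X.G (p + 1)},
    X.IsDegOfMoore (p + 1) α g → t ∈ α →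
    ∃ α' g', X.IsDegOfMoore p α' g' ∧ g = X.s p t g' ∧ (∀ i ∈ α, i < t → i ∈ α') ∧
      ∀ i ∈ α', (i < t ∧ i ∈ α) ∨ (t ≤ i ∧ i + 1 ∈ α)
  | _, [], _, _, ht => by simp at ht
  | p, j :: α₀, _, h, ht => by
    obtain _ | @⟨_, _, _, g₀, hg, hα, hj⟩ := h
    rcases List.mem_cons.mp ht with rfl | ht
    · refine ⟨α₀, g₀, hg, rfl, fun i hi hit => ?_,
        fun i hi => Or.inl ⟨hα i hi, List.mem_cons_of_mem _ hi⟩⟩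
      rcases List.mem_cons.mp hi with rfl | hi
      · omega
      · exact hi
    · have htj := hα t ht
      obtain ⟨q₁, rfl⟩ : ∃ q₁, p = q₁ + 1 := ⟨p - 1, by omega⟩
      obtain ⟨α', g', hg', rfl, hsub, hα'⟩ := exists_eq_s_apply hg ht
      refine ⟨(j - 1) :: α', X.s q₁ (j - 1) g', cons hg' (fun i hi => ?_) (by omega), ?_,
        fun i hi hit => ?_, fun i hi => ?_⟩
      · rcases hα' i hi with ⟨h1, -⟩ | ⟨-, h2⟩
        · omega
        · have := hα _ h2; omega
      · rw [X.ss q₁ t (j - 1) (by omega) (by omega), Nat.sub_add_cancel (by omega)]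
      · rcases List.mem_cons.mp hi with rfl | hi
        · omega
        · exact List.mem_cons_of_mem _ (hsub i hi hit)
      · rcases List.mem_cons.mp hi with rfl | hi
        · exact Or.inr ⟨by omega, by rw [Nat.sub_add_cancel (by omega)]; exact List.mem_cons_self⟩
        · rcases hα' i hi with ⟨h1, h2⟩ | ⟨h1, h2⟩
          · exact Or.inl ⟨h1, List.mem_cons_of_mem _ h2⟩
          · exact Or.inr ⟨h1, List.mem_cons_of_mem _ h2⟩

theorem exists_eq_castHom_sComp (h : X.IsDegOfMoore q α g) :
    ∃ (p : ℕ) (hp : p + α.length = q) (x : X.G p), x ∈ X.NG p ∧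
      g = X.castHom hp (X.sComp p α x) := by
  induction h with
  | nil hx => exact ⟨_, rfl, _, hx, rfl⟩
  | cons _ _ _ ih =>
    obtain ⟨p, rfl, x, hx, rfl⟩ := ih
    exact ⟨p, rfl, x, hx, rfl⟩

theorem exists_eq_sMapN (h : X.IsDegOfMoore q α g) :
    ∃ x ∈ X.NG (q - α.length), g = X.sMapN q α x := by
  obtain ⟨p, rfl, x, hx, rfl⟩ := h.exists_eq_castHom_sComp
  have hp : p = p + α.length - α.length := (Nat.add_sub_cancel p α.length).symm
  refine ⟨X.castHom hp x, castHom_mem_NG hp hx, ?_⟩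
  rw [SGrp.sMapN, dif_pos (Nat.sub_add_cancel (Nat.le_add_left _ _)), MonoidHom.comp_apply,
    sComp_castHom, castHom_castHom]

theorem sIdx (h : X.IsDegOfMoore q α g) (hne : α ≠ []) : SIdx q α := by
  obtain ⟨p, hp, -⟩ := h.exists_eq_castHom_sComp
  exact ⟨hne, h.isChain, by omega, h.lt⟩

end IsDegOfMoore

variable (X) in
def degSet (q r : ℕ) : Set (X.G q) :=
  {g | ∃ α, (∀ i ∈ α, r ≤ i) ∧ X.IsDegOfMoore q α g}

variable (X) in
def properDegSet (q r : ℕ) : Set (X.G q) :=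
  {g | ∃ α ≠ [], (∀ i ∈ α, r ≤ i) ∧ X.IsDegOfMoore q α g}

variable (X) in
def peifferSet (q : ℕ) : Set (X.G (q + 1)) :=
  {z | ∃ α β g h, α ≠ [] ∧ β ≠ [] ∧ X.IsDegOfMoore (q + 1) α g ∧
    X.IsDegOfMoore (q + 1) β h ∧ (∀ i ∈ α, i ∉ β) ∧ Slt β α ∧ z = X.pComp q q ⁅g, h⁆}

theorem properDegSet_subset_of_le {q r r' : ℕ} (h : r ≤ r') :
    X.properDegSet q r' ⊆ X.properDegSet q r :=
  fun _ ⟨α, hne, hα, hg⟩ => ⟨α, hne, fun i hi => h.trans (hα i hi), hg⟩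

theorem properDegSet_subset_degSet {q r r' : ℕ} (h : r ≤ r') :
    X.properDegSet q r' ⊆ X.degSet q r :=
  fun _ ⟨α, _, hα, hg⟩ => ⟨α, fun i hi => h.trans (hα i hi), hg⟩

theorem NG_subset_degSet (q r : ℕ) : (X.NG q : Set (X.G q)) ⊆ X.degSet q r :=
  fun _ hx => ⟨[], by simp, .nil hx⟩

theorem peifferSet_subset_NG (q : ℕ) : X.peifferSet q ⊆ X.NG (q + 1) := by
  rintro _ ⟨α, β, g, h, -, -, -, -, -, -, rfl⟩
  exact pComp_mem_NG q _

theorem s_mem_properDegSet {q r t : ℕ} (hrt : r ≤ t) (ht : t ≤ q) {g : X.G q}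
    (hg : g ∈ X.degSet q r) : X.s q t g ∈ X.properDegSet (q + 1) r := by
  obtain ⟨α, hα, hg⟩ := hg
  obtain ⟨α', hne, hα', hg'⟩ := hg.exists_s_apply ht
  refine ⟨α', hne, fun i hi => ?_, hg'⟩
  rcases hα' i hi with rfl | ⟨e, he, rfl | rfl⟩
  · exact hrt
  · exact hα i he
  · exact (hα e he).trans (Nat.le_succ e)

theorem s_mem_closure_properDegSet {q r t : ℕ} (hrt : r ≤ t) (ht : t ≤ q) {c : X.G q}
    (hc : c ∈ closure (X.degSet q r)) : X.s q t c ∈ closure (X.properDegSet (q + 1) r) := by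
  have hmap := mem_map_of_mem (X.s q t) hc
  rw [MonoidHom.map_closure] at hmap
  refine closure_mono ?_ hmap
  rintro _ ⟨g, hg, rfl⟩
  exact s_mem_properDegSet hrt ht hg

theorem kerFacesBelow_le_closure_degSet :
    ∀ q r, X.kerFacesBelow q r ≤ closure (X.degSet q r)
  | 0, r, _, _ => subset_closure (NG_subset_degSet 0 r (mem_top _))
  | q + 1, r, _, hz =>
    mem_of_pComp_mem _ hz (subset_closure (NG_subset_degSet _ r (pComp_mem_NG q _)))
      fun r' hr' hr'q _ hc => closure_mono (properDegSet_subset_degSet hr')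
        (s_mem_closure_properDegSet le_rfl hr'q (kerFacesBelow_le_closure_degSet q r' hc))

theorem slt_of_mem_of_lt {α β : List ℕ} {k : ℕ} (hα : α.IsChain (· > ·)) (hk : k ∈ α)
    (hβ : β ≠ []) (hβk : ∀ i ∈ β, k < i) : Slt β α := by
  obtain ⟨a, r, hr⟩ :=
    List.exists_cons_of_ne_nil (List.reverse_ne_nil_iff.mpr (List.ne_nil_of_mem hk))
  obtain ⟨e, r', hr'⟩ := List.exists_cons_of_ne_nil (List.reverse_ne_nil_iff.mpr hβ)
  have hsorted : (a :: r).Pairwise (· < ·) := by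
    rw [← hr, List.pairwise_reverse]
    exact List.isChain_iff_pairwise.mp hα
  have hak : a ≤ k := by
    rcases List.mem_cons.mp (hr ▸ List.mem_reverse.mpr hk) with rfl | h
    · exact le_rfl
    · exact (List.rel_of_pairwise_cons hsorted h).le
  have hke : k < e := hβk e (List.mem_reverse.mp (hr' ▸ List.mem_cons_self))
  unfold Slt
  rw [hr, hr']
  exact List.Lex.rel (hak.trans_lt hke)

theorem commutatorElement_mem_closure_of_disjoint {q k : ℕ} {α β : List ℕ} {g h : X.G (q + 1)}
    (hg : X.IsDegOfMoore (q + 1) α g) (hh : X.IsDegOfMoore (q + 1) β h) (hβ : β ≠ [])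
    (hk : k ∈ α) (hαk : ∀ i ∈ α, k ≤ i) (hβk : ∀ i ∈ β, k < i) (hdisj : ∀ i ∈ α, i ∉ β) :
    ⁅g, h⁆ ∈ closure (X.properDegSet (q + 1) (k + 1) ∪ X.peifferSet q) := by
  have hkq : k < q + 1 := hg.lt k hk
  have hz : ⁅g, h⁆ ∈ X.kerFacesBelow (q + 1) (k + 1) := by
    simpa using commutatorElement_mem_kerFacesBelow (hg.mem_kerFacesBelow hαk hkq.le)
      (hh.mem_kerFacesBelow hβk hkq)
  have hpeiffer : X.pComp q q ⁅g, h⁆ ∈ X.peifferSet q := ⟨α, β, g, h, List.ne_nil_of_mem hk, hβ,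
    hg, hh, hdisj, slt_of_mem_of_lt hg.isChain hk hβ hβk, rfl⟩
  refine mem_of_pComp_mem _ hz (subset_closure (Or.inr hpeiffer)) fun r hr hrq c hc => ?_
  exact closure_mono ((properDegSet_subset_of_le hr).trans Set.subset_union_left)
    (s_mem_closure_properDegSet le_rfl hrq (kerFacesBelow_le_closure_degSet q r hc))

theorem commutatorElement_mem_closure (q : ℕ) {k : ℕ} {α β : List ℕ} {g h : X.G (q + 1)}
    (hg : X.IsDegOfMoore (q + 1) α g) (hh : X.IsDegOfMoore (q + 1) β h) (hβ : β ≠ [])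
    (hk : k ∈ α) (hαk : ∀ i ∈ α, k ≤ i) (hβk : ∀ i ∈ β, k < i) :
    ⁅g, h⁆ ∈ closure (X.properDegSet (q + 1) (k + 1) ∪ X.peifferSet q) := by
  induction q using Nat.strong_induction_on generalizing α β with
  | _ q ih =>
    by_cases hdisj : ∀ i ∈ α, i ∉ β
    · exact commutatorElement_mem_closure_of_disjoint hg hh hβ hk hαk hβk hdisj
    push Not at hdisj
    obtain ⟨t, htα, htβ⟩ := hdisj
    have hkt : k < t := hβk t htβ
    have htq : t ≤ q := Nat.lt_succ_iff.mp (hg.lt t htα)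
    obtain ⟨α', g', hg', rfl, hα'sub, hα'⟩ := hg.exists_eq_s_apply htα
    obtain ⟨β', h', hh', rfl, -, hβ'⟩ := hh.exists_eq_s_apply htβ
    have hk' : k ∈ α' := hα'sub k hk hkt
    have hcomm : ⁅g', h'⁆ ∈ closure (X.degSet q (k + 1)) := by
      rcases eq_or_ne β' [] with rfl | hβ'ne
      · cases hh' with
        | nil hh' =>
          refine subset_closure (NG_subset_degSet q _ ?_)
          rw [NG_eq_kerFacesBelow] at hh' ⊢
          simpa using commutatorElement_mem_kerFacesBelow (mem_kerFacesBelow_zero q g') hh'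
      · obtain ⟨q₁, rfl⟩ : ∃ q₁, q = q₁ + 1 := ⟨q - 1, by have := hg'.lt k hk'; omega⟩
        refine closure_mono (Set.union_subset (properDegSet_subset_degSet le_rfl)
          ((peifferSet_subset_NG q₁).trans (NG_subset_degSet _ _)))
          (ih q₁ (by omega) hg' hh' hβ'ne hk' (fun i hi => ?_) (fun i hi => ?_))
        · rcases hα' i hi with ⟨-, h⟩ | ⟨h, -⟩
          · exact hαk i h
          · omega
        · rcases hβ' i hi with ⟨-, h⟩ | ⟨h, -⟩
          · exact hβk i h
          · omega
    rw [← map_commutatorElement]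
    exact closure_mono Set.subset_union_left (s_mem_closure_properDegSet hkt htq hcomm)

variable (X) in
def minDegSet (q k : ℕ) : Set (X.G q) :=
  {g | ∃ α, k ∈ α ∧ (∀ i ∈ α, k ≤ i) ∧ X.IsDegOfMoore q α g}

variable (X) in
def degFiltration (q k : ℕ) : Subgroup (X.G (q + 1)) :=
  closure (X.properDegSet (q + 1) k) ⊔ normalClosure (X.peifferSet q)

theorem properDegSet_subset_union (q k : ℕ) :
    X.properDegSet q k ⊆ X.minDegSet q k ∪ X.properDegSet q (k + 1) := by
  rintro g ⟨α, hne, hα, hg⟩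
  by_cases hk : k ∈ α
  · exact Or.inl ⟨α, hk, hα, hg⟩
  · exact Or.inr ⟨α, hne, fun i hi => lt_of_le_of_ne (hα i hi) fun h => hk (h ▸ hi), hg⟩

theorem properDegSet_self_eq_empty (q : ℕ) : X.properDegSet q q = ∅ := by
  refine Set.eq_empty_of_forall_notMem ?_
  rintro g ⟨α, hne, hα, hg⟩
  obtain ⟨i, hi⟩ := List.exists_mem_of_ne_nil α hne
  exact absurd (hg.lt i hi) (not_lt.mpr (hα i hi))

theorem closure_minDegSet_le_range (q k : ℕ) :
    closure (X.minDegSet (q + 1) k) ≤ (X.s q k).range := by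
  rw [closure_le]
  rintro _ ⟨α, hk, -, hg⟩
  obtain ⟨-, g', -, rfl, -⟩ := hg.exists_eq_s_apply hk
  exact ⟨g', rfl⟩

theorem degFiltration_le_kerFacesBelow {q k : ℕ} (hk : k ≤ q + 1) :
    X.degFiltration q k ≤ X.kerFacesBelow (q + 1) k := by
  refine sup_le ((closure_le _).mpr ?_) (normalClosure_le_normal ?_)
  · rintro _ ⟨α, -, hα, hg⟩
    exact hg.mem_kerFacesBelow hα hk
  · exact (peifferSet_subset_NG q).trans (NG_eq_kerFacesBelow (q + 1) ▸ kerFacesBelow_antitone hk)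

theorem closure_union_peifferSet_le_degFiltration (q k : ℕ) :
    closure (X.properDegSet (q + 1) k ∪ X.peifferSet q) ≤ X.degFiltration q k :=
  (closure_le _).mpr (Set.union_subset (fun _ hg => mem_sup_left (subset_closure hg))
    fun _ hg => mem_sup_right (subset_normalClosure hg))

theorem degFiltration_le_sup (q k : ℕ) :
    X.degFiltration q k ≤ closure (X.minDegSet (q + 1) k) ⊔ X.degFiltration q (k + 1) := by
  refine sup_le ((closure_le _).mpr fun g hg => ?_) (le_sup_right.trans le_sup_right)
  rcases properDegSet_subset_union _ k hg with hg | hg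
  · exact mem_sup_left (subset_closure hg)
  · exact mem_sup_right (mem_sup_left (subset_closure hg))

theorem conj_mem_degFiltration {q k : ℕ} {e : X.G (q + 1)} (he : e ∈ X.minDegSet (q + 1) k)
    {m : X.G (q + 1)} (hm : m ∈ X.degFiltration q (k + 1)) :
    e * m * e⁻¹ ∈ X.degFiltration q (k + 1) := by
  obtain ⟨α, hk, hα, he⟩ := he
  suffices X.degFiltration q (k + 1) ≤ (X.degFiltration q (k + 1)).comap (MulAut.conj e) from
    this hm
  refine sup_le ((closure_le _).mpr ?_) fun m hm =>
    mem_sup_right ((normalClosure_normal).conj_mem m hm e)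
  rintro f ⟨β, hβ, hβk, hf⟩
  change e * f * e⁻¹ ∈ X.degFiltration q (k + 1)
  rw [show e * f * e⁻¹ = ⁅e, f⁆ * f by group]
  exact mul_mem (closure_union_peifferSet_le_degFiltration q (k + 1)
      (commutatorElement_mem_closure q he hf hβ hk hα hβk))
    (mem_sup_left (subset_closure ⟨β, hβ, hβk, hf⟩))

theorem minDegSet_subset_normalizer (q k : ℕ) :
    X.minDegSet (q + 1) k ⊆ normalizer (X.degFiltration q (k + 1) : Set (X.G (q + 1))) := by
  intro e he
  refine mem_normalizer_iff.mpr fun m => ⟨conj_mem_degFiltration he, fun hm => ?_⟩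
  obtain ⟨α, hk, hα, he'⟩ := he
  simpa [mul_assoc] using conj_mem_degFiltration ⟨α, hk, hα, he'.inv⟩ hm

theorem mem_degFiltration_succ {q k : ℕ} (hk : k ≤ q) {m : X.G (q + 1)}
    (hm : m ∈ X.degFiltration q k) (hNG : m ∈ X.NG (q + 1)) :
    m ∈ X.degFiltration q (k + 1) := by
  have hnorm : closure (X.minDegSet (q + 1) k) ≤
      normalizer (X.degFiltration q (k + 1) : Set (X.G (q + 1))) :=
    (closure_le _).mpr (minDegSet_subset_normalizer q k)
  obtain ⟨_, he, w, hw, rfl⟩ : m ∈ (closure (X.minDegSet (q + 1) k) : Set (X.G (q + 1))) *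
      (X.degFiltration q (k + 1) : Set (X.G (q + 1))) := by
    rw [← coe_mul_of_left_le_normalizer_right _ _ hnorm]
    exact degFiltration_le_sup q k hm
  -- `m = s_k x · w` with `d_k w = 1`, so `x = d_k m = 1`.
  obtain ⟨x, rfl⟩ := closure_minDegSet_le_range q k he
  have hw1 : X.d q k w = 1 :=
    mem_kerFacesBelow_succ.mp (degFiltration_le_kerFacesBelow (by omega) hw) k (by omega)
  have hm1 : X.d q k (X.s q k x * w) = 1 :=
    mem_kerFacesBelow_succ.mp (NG_eq_kerFacesBelow (q + 1) ▸ hNG) k (by omega)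
  rw [map_mul, hw1, mul_one, X.ds_eq q k hk] at hm1
  simpa [hm1] using hw

theorem NG_inf_closure_properDegSet_le (q : ℕ) :
    X.NG (q + 1) ⊓ closure (X.properDegSet (q + 1) 0) ≤ normalClosure (X.peifferSet q) := by
  rintro m ⟨hNG, hm⟩
  have hk : ∀ k ≤ q + 1, m ∈ X.degFiltration q k := by
    intro k hk
    induction k with
    | zero => exact mem_sup_left hm
    | succ k ih => exact mem_degFiltration_succ (by omega) (ih (by omega)) hNG
  simpa [degFiltration, properDegSet_self_eq_empty] using hk (q + 1) le_rfl

theorem closure_range_s_le (q : ℕ) :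
    closure (⋃ i ∈ Finset.range (q + 1), Set.range (X.s q i)) ≤
      closure (X.properDegSet (q + 1) 0) := by
  refine (closure_le _).mpr ?_
  simp only [Set.iUnion_subset_iff, Finset.mem_range]
  rintro i hi _ ⟨y, rfl⟩
  exact s_mem_closure_properDegSet (Nat.zero_le i) (by omega)
    (kerFacesBelow_le_closure_degSet q 0 (mem_kerFacesBelow_zero q y))

end SGrp

/-- Theorem A: at each level `N = n + 2 > 1`, with `D_N` the
subgroup generated by the degenerate elements and `N_N` the normal closure of
the Peiffer elements `F_{α,β}(x,y) = p([s_α x, s_β y])` for `(α,β) ∈ P(N)`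
(disjoint, `β < α`), `x ∈ NG_{N-#α}`, `y ∈ NG_{N-#β}`, where
`p = p_{N-1} ∘ ⋯ ∘ p_0`, one has `NG_N ⊓ D_N = N_N ⊓ D_N`. -/
theorem stmt10 (X : SGrp) (n : ℕ) :
    let N := n + 2
    let D : Subgroup (X.G N) :=
      Subgroup.closure (⋃ i ∈ Finset.range N, Set.range (X.s (n+1) i))
    let Nn : Subgroup (X.G N) := Subgroup.normalClosure
      {g : X.G N | ∃ (α β : List ℕ) (x : X.G (N - α.length)) (y : X.G (N - β.length)),
        SIdx N α ∧ SIdx N β ∧ (∀ i ∈ α, i ∉ β) ∧ Slt β α ∧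
        x ∈ X.NG (N - α.length) ∧ y ∈ X.NG (N - β.length) ∧
        g = X.pComp (n+1) (n+1) ⁅X.sMapN N α x, X.sMapN N β y⁆}
    X.NG N ⊓ D = Nn ⊓ D := by
  intro N D Nn
  have hpeiffer : Subgroup.normalClosure (X.peifferSet (n + 1)) ≤ Nn := by
    refine Subgroup.normalClosure_mono ?_
    rintro _ ⟨α, β, g, h, hα, hβ, hg, hh, hdisj, hslt, rfl⟩
    obtain ⟨x, hx, rfl⟩ := hg.exists_eq_sMapN
    obtain ⟨y, hy, rfl⟩ := hh.exists_eq_sMapN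
    exact ⟨α, β, x, y, hg.sIdx hα, hh.sIdx hβ, hdisj, hslt, hx, hy, rfl⟩
  have hNn : Nn ≤ X.NG N := by
    refine Subgroup.normalClosure_le_normal ?_
    rintro _ ⟨α, β, x, y, -, -, -, -, -, -, rfl⟩
    exact SGrp.pComp_mem_NG (n + 1) _
  refine le_antisymm (fun z hz => ⟨hpeiffer ?_, hz.2⟩) (inf_le_inf_right D hNn)
  exact SGrp.NG_inf_closure_properDegSet_le (n + 1) ⟨hz.1, SGrp.closure_range_s_le (n + 1) hz.2⟩
end
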